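/- Let K be a field and let (A,d_A) and (B,d_B) be graded commutative dg-division rings over K, with a dg-extension φ:(B,d_B)→(A,d_A). Then ker(d_A) and ker(d_B) are graded-commutative graded-division rings. -/

import Mathlib

open scoped TensorProduct

section DGCore

variable {A : Type} [Ring A] {B : Type} [Ring B]

/-- `(A, d)` together with the grading `𝒜` is a differential graded ring:
`d` is a square-zero additive endomorphism of degree `1` satisfying the graded
Leibniz rule. -/
structure IsDGRing (𝒜 : ℤ → AddSubgroup A) (d : A →+ A) : Prop where
  d_sq : ∀ x, d (d x) = 0
  d_mem : ∀ (i : ℤ), ∀ x ∈ 𝒜 i, d x ∈ 𝒜 (i + 1)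
  leibniz : ∀ (i : ℤ) (a b : A), a ∈ 𝒜 i →
    d (a * b) = d a * b + ((Int.negOnePow i : ℤ)) • (a * d b)

/-- A homomorphism of differential graded rings (a dg-extension). -/
structure IsDGHom (𝒜 : ℤ → AddSubgroup A) (dA : A →+ A)
    (𝒝 : ℤ → AddSubgroup B) (dB : B →+ B) (φ : A →+* B) : Prop where
  map_mem : ∀ (i : ℤ), ∀ x ∈ 𝒜 i, φ x ∈ 𝒝 i
  map_d : ∀ x, φ (dA x) = dB (φ x)

/-- Graded commutativity: `a * b = (-1)^{|a||b|} b * a` for homogeneous elements. -/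
def IsGradedComm (𝒜 : ℤ → AddSubgroup A) : Prop :=
  ∀ (i j : ℤ) (a b : A), a ∈ 𝒜 i → b ∈ 𝒜 j →
    a * b = ((Int.negOnePow (i * j) : ℤ)) • (b * a)

/-- A dg-ring is acyclic if its homology vanishes, i.e. every cycle is a boundary. -/
def IsAcyclic (d : A →+ A) : Prop := ∀ x, d x = 0 → ∃ y, d y = x

/-- A dg left ideal: a graded additive subgroup closed under the differential and
under left multiplication. -/
def IsDGLeftIdeal (𝒜 : ℤ → AddSubgroup A) [GradedRing 𝒜] (d : A →+ A)
    (I : AddSubgroup A) : Prop :=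
  (∀ (a : A), ∀ x ∈ I, a * x ∈ I) ∧ (∀ x ∈ I, d x ∈ I) ∧
    (∀ x ∈ I, ∀ i : ℤ, (DirectSum.decompose 𝒜 x i : A) ∈ I)

/-- A dg right ideal. -/
def IsDGRightIdeal (𝒜 : ℤ → AddSubgroup A) [GradedRing 𝒜] (d : A →+ A)
    (I : AddSubgroup A) : Prop :=
  (∀ (a : A), ∀ x ∈ I, x * a ∈ I) ∧ (∀ x ∈ I, d x ∈ I) ∧
    (∀ x ∈ I, ∀ i : ℤ, (DirectSum.decompose 𝒜 x i : A) ∈ I)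

/-- A dg-division ring: the only dg left ideals and the only dg right ideals
are `0` and the whole ring. -/
def IsDGDivisionRing (𝒜 : ℤ → AddSubgroup A) [GradedRing 𝒜] (d : A →+ A) : Prop :=
  (0 : A) ≠ 1 ∧ (∀ I, IsDGLeftIdeal 𝒜 d I → I = ⊥ ∨ I = ⊤) ∧
    (∀ I, IsDGRightIdeal 𝒜 d I → I = ⊥ ∨ I = ⊤)

/-- A graded division ring (gr-field): every nonzero homogeneous element is invertible. -/
def IsGradedDivisionRing (𝒜 : ℤ → AddSubgroup A) : Prop :=
  (0 : A) ≠ 1 ∧ ∀ (i : ℤ) (x : A), x ∈ 𝒜 i → x ≠ 0 → IsUnit x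

/-- The relations defining `B ⊗[A] B` inside `B ⊗[ℤ] B`, for an extension `φ : A →+* B`. -/
def sepRel (φ : A →+* B) : Submodule ℤ (B ⊗[ℤ] B) :=
  Submodule.span ℤ {x | ∃ (b b' : B) (a : A),
    x = (b * φ a) ⊗ₜ[ℤ] b' - b ⊗ₜ[ℤ] (φ a * b')}

/-- The balanced tensor product `B ⊗[A] B` for an extension `φ : A →+* B`. -/
abbrev SepTensor (φ : A →+* B) := (B ⊗[ℤ] B) ⧸ sepRel φ

/-- The canonical projection `B ⊗[ℤ] B → B ⊗[A] B`. -/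
noncomputable def sepMk (φ : A →+* B) : B ⊗[ℤ] B →ₗ[ℤ] SepTensor φ := (sepRel φ).mkQ

/-- The multiplication map `μ : B ⊗[A] B → B`. -/
noncomputable def sepMul (φ : A →+* B) : SepTensor φ →ₗ[ℤ] B :=
  Submodule.liftQ _ (TensorProduct.lift (LinearMap.mul ℤ B)) (by
    rw [sepRel, Submodule.span_le]
    rintro x ⟨b, b', a, rfl⟩
    refine LinearMap.mem_ker.mpr ?_
    erw [map_sub, TensorProduct.lift.tmul, TensorProduct.lift.tmul]
    simp [mul_assoc])

/-- Left multiplication by `b` on `B ⊗[A] B`. -/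
noncomputable def sepLMul (φ : A →+* B) (b : B) : SepTensor φ →ₗ[ℤ] SepTensor φ :=
  Submodule.mapQ _ _ (TensorProduct.map (LinearMap.mulLeft ℤ b) LinearMap.id) (by
    rw [sepRel, Submodule.span_le]
    rintro x ⟨b₀, b', a, rfl⟩
    simp only [SetLike.mem_coe, Submodule.mem_comap, map_sub, TensorProduct.map_tmul,
      LinearMap.mulLeft_apply, LinearMap.id_apply]
    exact Submodule.subset_span ⟨b * b₀, b', a, by
      erw [map_sub, TensorProduct.map_tmul, TensorProduct.map_tmul]
      simp [mul_assoc]⟩)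

/-- Right multiplication by `b` on `B ⊗[A] B`. -/
noncomputable def sepRMul (φ : A →+* B) (b : B) : SepTensor φ →ₗ[ℤ] SepTensor φ :=
  Submodule.mapQ _ _ (TensorProduct.map LinearMap.id (LinearMap.mulRight ℤ b)) (by
    rw [sepRel, Submodule.span_le]
    rintro x ⟨b₀, b', a, rfl⟩
    simp only [SetLike.mem_coe, Submodule.mem_comap, map_sub, TensorProduct.map_tmul,
      LinearMap.mulRight_apply, LinearMap.id_apply]
    exact Submodule.subset_span ⟨b₀, b' * b, a, by
      erw [map_sub, TensorProduct.map_tmul, TensorProduct.map_tmul]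
      simp [mul_assoc]⟩)

/-- The grading on `B ⊗[A] B`: the degree `n` part is generated by the classes of
`b ⊗ b'` with `b, b'` homogeneous of degrees summing to `n`. -/
noncomputable def sepGrading (φ : A →+* B) (𝒝 : ℤ → AddSubgroup B) (n : ℤ) :
    AddSubgroup (SepTensor φ) :=
  AddSubgroup.closure {x | ∃ (i j : ℤ) (b b' : B), b ∈ 𝒝 i ∧ b' ∈ 𝒝 j ∧ i + j = n ∧
    x = sepMk φ (b ⊗ₜ[ℤ] b')}

/-- The sign involution `b ↦ (-1)^{|b|} b` of a graded ring. -/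
noncomputable def signMap (𝒝 : ℤ → AddSubgroup B) [GradedRing 𝒝] : B →+ B :=
  (DirectSum.toAddMonoid fun i =>
      (smulAddHom ℤ B ((Int.negOnePow i : ℤ))).comp (𝒝 i).subtype).comp
    (DirectSum.decomposeAddEquiv 𝒝).toAddMonoidHom

lemma signMap_of_mem (𝒝 : ℤ → AddSubgroup B) [GradedRing 𝒝] {i : ℤ} {x : B}
    (hx : x ∈ 𝒝 i) : signMap 𝒝 x = ((Int.negOnePow i : ℤ)) • x := by
  classical
  unfold signMap
  simp only [AddMonoidHom.comp_apply, AddEquiv.coe_toAddMonoidHom,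
    DirectSum.decomposeAddEquiv_apply, DirectSum.decompose_of_mem 𝒝 hx,
    DirectSum.toAddMonoid_of]
  rfl

/-- The differential `d ⊗ 1 + ε ⊗ d` on `B ⊗[ℤ] B` (with Koszul sign). -/
noncomputable def sepDiffPre (𝒝 : ℤ → AddSubgroup B) [GradedRing 𝒝] (dB : B →+ B) :
    B ⊗[ℤ] B →ₗ[ℤ] B ⊗[ℤ] B :=
  TensorProduct.map dB.toIntLinearMap LinearMap.id +
    TensorProduct.map (signMap 𝒝).toIntLinearMap dB.toIntLinearMap

/-- `D` is the differential induced on `B ⊗[A] B` by `d_B ⊗ 1 + ε ⊗ d_B`. -/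
def IsSepDiff (φ : A →+* B) (𝒝 : ℤ → AddSubgroup B) [GradedRing 𝒝] (dB : B →+ B)
    (D : SepTensor φ →+ SepTensor φ) : Prop :=
  ∀ x : B ⊗[ℤ] B, D (sepMk φ x) = sepMk φ (sepDiffPre 𝒝 dB x)

/-- `ρ : B → B ⊗[A] B` is a `B`-`B`-bimodule section of the multiplication map. -/
def IsSepSection (φ : A →+* B) (ρ : B →+ SepTensor φ) : Prop :=
  (∀ b, sepMul φ (ρ b) = b) ∧
    (∀ (b₁ c b₂ : B), ρ (b₁ * c * b₂) = sepLMul φ b₁ (sepRMul φ b₂ (ρ c)))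

/-- The extension `φ : A →+* B` is separable: the multiplication map
`B ⊗[A] B → B` splits as a bimodule map. -/
def IsSeparableExt (φ : A →+* B) : Prop := ∃ ρ : B →+ SepTensor φ, IsSepSection φ ρ

/-- The extension `φ : A →+* B` of graded rings is graded-separable: the multiplication
map `B ⊗[A] B → B` splits as a map of graded bimodules. -/
def IsGrSeparable (φ : A →+* B) (𝒝 : ℤ → AddSubgroup B) : Prop :=
  ∃ ρ : B →+ SepTensor φ, IsSepSection φ ρ ∧
    ∀ (n : ℤ), ∀ b ∈ 𝒝 n, ρ b ∈ sepGrading φ 𝒝 n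

/-- The dg-extension `φ : (A,d_A) →  (B,d_B)` is dg-separable: the multiplication map
`B ⊗[A] B → B` splits as a map of differential graded bimodules. -/
def IsDGSeparable (φ : A →+* B) (𝒝 : ℤ → AddSubgroup B) [GradedRing 𝒝]
    (dB : B →+ B) : Prop :=
  ∃ D : SepTensor φ →+ SepTensor φ, IsSepDiff φ 𝒝 dB D ∧
    ∃ ρ : B →+ SepTensor φ, IsSepSection φ ρ ∧
      (∀ (n : ℤ), ∀ b ∈ 𝒝 n, ρ b ∈ sepGrading φ 𝒝 n) ∧
      (∀ b, D (ρ b) = ρ (dB b))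

end DGCore

/-!
A nonzero homogeneous cycle `x` generates the left ideal `R x` and the right ideal `x R`;
because `d x = 0`, the Leibniz rule makes both of them dg ideals, so in a dg-division ring
both are the whole ring and `x` has a left and a right inverse. The component of degree
`-|x|` of the left inverse is then a homogeneous two-sided inverse, and the Leibniz rule
applied to `x⁻¹ x = 1` shows that `x⁻¹` is again a cycle. Graded commutativity of the
cycles is inherited from the ambient ring.
-/

section GradedRing

variable {ι R σ : Type*} [AddGroup ι] [DecidableEq ι] [Semiring R] [SetLike σ R]
  [AddSubmonoidClass σ R] (𝒜 : ι → σ) [GradedRing 𝒜]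

theorem exists_homogeneous_inverse_of_mem {i : ι} {x y z : R} (hx : x ∈ 𝒜 i)
    (hyx : y * x = 1) (hxz : x * z = 1) :
    ∃ w ∈ 𝒜 (-i), x * w = 1 ∧ w * x = 1 := by
  set w : R := ↑(DirectSum.decompose 𝒜 y (-i))
  have hwx : w * x = 1 := by
    rw [← DirectSum.coe_decompose_mul_add_of_right_mem 𝒜 hx, hyx, neg_add_cancel,
      DirectSum.decompose_of_mem_same 𝒜 SetLike.GradedOne.one_mem]
  have hwz : w = z := left_inv_eq_right_inv hwx hxz
  exact ⟨w, SetLike.coe_mem _, hwz ▸ hxz, hwx⟩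

end GradedRing

namespace IsDGRing

variable {R : Type} [Ring R] {𝒜 : ℤ → AddSubgroup R} {d : R →+ R}

theorem map_one [SetLike.GradedOne 𝒜] (hd : IsDGRing 𝒜 d) : d 1 = 0 := by
  have h := hd.leibniz 0 1 1 SetLike.GradedOne.one_mem
  simp only [one_mul, mul_one, Int.negOnePow_zero, Units.val_one, one_smul] at h
  exact left_eq_add.mp h

theorem map_eq_zero_of_mul_eq_one [SetLike.GradedOne 𝒜] (hd : IsDGRing 𝒜 d) {j : ℤ}
    {x y : R} (hy : y ∈ 𝒜 j) (hdx : d x = 0) (hyx : y * x = 1) (hxy : x * y = 1) :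
    d y = 0 := by
  have hdyx : d y * x = 0 := by
    simpa [hyx, hdx, hd.map_one] using (hd.leibniz j y x hy).symm
  calc d y = d y * x * y := by rw [mul_assoc, hxy, mul_one]
    _ = 0 := by rw [hdyx, zero_mul]

theorem map_mul_of_map_eq_zero_right [GradedRing 𝒜] (hd : IsDGRing 𝒜 d) {x : R}
    (hdx : d x = 0) (b : R) : d (b * x) = d b * x := by
  induction b using DirectSum.Decomposition.inductionOn 𝒜 with
  | zero => simp
  | homogeneous b => rw [hd.leibniz _ b x b.2, hdx, mul_zero, smul_zero, add_zero]
  | add b b' hb hb' => rw [add_mul, map_add, hb, hb', map_add, add_mul]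

theorem isDGLeftIdeal_range_mulRight [GradedRing 𝒜] (hd : IsDGRing 𝒜 d) {i : ℤ} {x : R}
    (hx : x ∈ 𝒜 i) (hdx : d x = 0) :
    IsDGLeftIdeal 𝒜 d (AddMonoidHom.mulRight x).range := by
  refine ⟨?_, ?_, ?_⟩
  · rintro a _ ⟨b, rfl⟩
    exact ⟨a * b, mul_assoc a b x⟩
  · rintro _ ⟨b, rfl⟩
    exact ⟨d b, (hd.map_mul_of_map_eq_zero_right hdx b).symm⟩
  · rintro _ ⟨b, rfl⟩ j
    obtain ⟨k, rfl⟩ : ∃ k, j = k + i := ⟨j - i, (sub_add_cancel j i).symm⟩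
    exact ⟨_, (DirectSum.coe_decompose_mul_add_of_right_mem 𝒜 hx).symm⟩

theorem isDGRightIdeal_range_mulLeft [GradedRing 𝒜] (hd : IsDGRing 𝒜 d) {i : ℤ} {x : R}
    (hx : x ∈ 𝒜 i) (hdx : d x = 0) :
    IsDGRightIdeal 𝒜 d (AddMonoidHom.mulLeft x).range := by
  refine ⟨?_, ?_, ?_⟩
  · rintro a _ ⟨b, rfl⟩
    exact ⟨b * a, (mul_assoc x b a).symm⟩
  · rintro _ ⟨b, rfl⟩
    refine ⟨(Int.negOnePow i : ℤ) • d b, ?_⟩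
    change x * _ = d (x * b)
    rw [hd.leibniz i x b hx, hdx, zero_mul, zero_add, mul_smul_comm]
  · rintro _ ⟨b, rfl⟩ j
    obtain ⟨k, rfl⟩ : ∃ k, j = i + k := ⟨j - i, (add_sub_cancel i j).symm⟩
    exact ⟨_, (DirectSum.coe_decompose_mul_add_of_left_mem 𝒜 hx).symm⟩

end IsDGRing

namespace IsDGDivisionRing

variable {R : Type} [Ring R] {𝒜 : ℤ → AddSubgroup R} [GradedRing 𝒜] {d : R →+ R}

theorem one_mem_of_isDGLeftIdeal (hdiv : IsDGDivisionRing 𝒜 d) {I : AddSubgroup R}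
    (hI : IsDGLeftIdeal 𝒜 d I) {x : R} (hxI : x ∈ I) (hx0 : x ≠ 0) : (1 : R) ∈ I := by
  rcases hdiv.2.1 I hI with rfl | rfl
  · exact absurd hxI hx0
  · exact AddSubgroup.mem_top 1

theorem one_mem_of_isDGRightIdeal (hdiv : IsDGDivisionRing 𝒜 d) {I : AddSubgroup R}
    (hI : IsDGRightIdeal 𝒜 d I) {x : R} (hxI : x ∈ I) (hx0 : x ≠ 0) : (1 : R) ∈ I := by
  rcases hdiv.2.2 I hI with rfl | rfl
  · exact absurd hxI hx0
  · exact AddSubgroup.mem_top 1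

theorem exists_cycle_inverse (hdiv : IsDGDivisionRing 𝒜 d) (hd : IsDGRing 𝒜 d) {i : ℤ}
    {x : R} (hx : x ∈ 𝒜 i) (hdx : d x = 0) (hx0 : x ≠ 0) :
    ∃ y ∈ 𝒜 (-i), d y = 0 ∧ x * y = 1 ∧ y * x = 1 := by
  obtain ⟨y, hyx⟩ : ∃ y, y * x = 1 :=
    hdiv.one_mem_of_isDGLeftIdeal (hd.isDGLeftIdeal_range_mulRight hx hdx) ⟨1, one_mul x⟩ hx0
  obtain ⟨z, hxz⟩ : ∃ z, x * z = 1 :=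
    hdiv.one_mem_of_isDGRightIdeal (hd.isDGRightIdeal_range_mulLeft hx hdx) ⟨1, mul_one x⟩ hx0
  obtain ⟨w, hw, hxw, hwx⟩ := exists_homogeneous_inverse_of_mem 𝒜 hx hyx hxz
  exact ⟨w, hw, hd.map_eq_zero_of_mul_eq_one hw hdx hwx hxw, hxw, hwx⟩

end IsDGDivisionRing

theorem cycles_are_graded_division_general
    {A B : Type} [Ring A] [Ring B]
    (𝒜 : ℤ → AddSubgroup A) [GradedRing 𝒜] (𝒝 : ℤ → AddSubgroup B) [GradedRing 𝒝]
    (dA : A →+ A) (dB : B →+ B)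
    (hA : IsDGRing 𝒜 dA) (hB : IsDGRing 𝒝 dB)
    (hAcomm : IsGradedComm 𝒜) (hBcomm : IsGradedComm 𝒝)
    (hAdiv : IsDGDivisionRing 𝒜 dA) (hBdiv : IsDGDivisionRing 𝒝 dB) :
    ((∀ (i j : ℤ) (x y : A), x ∈ 𝒜 i → y ∈ 𝒜 j → dA x = 0 → dA y = 0 →
        x * y = ((Int.negOnePow (i * j) : ℤ)) • (y * x)) ∧
      (∀ (i : ℤ) (x : A), x ∈ 𝒜 i → dA x = 0 → x ≠ 0 →
        ∃ y ∈ 𝒜 (-i), dA y = 0 ∧ x * y = 1 ∧ y * x = 1)) ∧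
    ((∀ (i j : ℤ) (x y : B), x ∈ 𝒝 i → y ∈ 𝒝 j → dB x = 0 → dB y = 0 →
        x * y = ((Int.negOnePow (i * j) : ℤ)) • (y * x)) ∧
      (∀ (i : ℤ) (x : B), x ∈ 𝒝 i → dB x = 0 → x ≠ 0 →
        ∃ y ∈ 𝒝 (-i), dB y = 0 ∧ x * y = 1 ∧ y * x = 1)) :=
  ⟨⟨fun i j x y hx hy _ _ => hAcomm i j x y hx hy,
      fun _ _ hx hdx hx0 => hAdiv.exists_cycle_inverse hA hx hdx hx0⟩,
    ⟨fun i j x y hx hy _ _ => hBcomm i j x y hx hy,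
      fun _ _ hx hdx hx0 => hBdiv.exists_cycle_inverse hB hx hdx hx0⟩⟩

/-- For a dg-extension `φ : (B,d_B) → (A,d_A)` of graded commutative
dg-division rings over a field `K`, the cycles `ker d_A` and `ker d_B` are
graded-commutative graded-division rings. -/
theorem cycles_are_graded_division
    {K A B : Type} [Field K] [Ring A] [Ring B] [Algebra K A] [Algebra K B]
    (𝒜 : ℤ → AddSubgroup A) [GradedRing 𝒜] (𝒝 : ℤ → AddSubgroup B) [GradedRing 𝒝]
    (dA : A →+ A) (dB : B →+ B)
    (hA : IsDGRing 𝒜 dA) (hB : IsDGRing 𝒝 dB)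
    (hAK : ∀ (k : K) (x : A), dA (k • x) = k • dA x)
    (hBK : ∀ (k : K) (x : B), dB (k • x) = k • dB x)
    (hAcomm : IsGradedComm 𝒜) (hBcomm : IsGradedComm 𝒝)
    (hAdiv : IsDGDivisionRing 𝒜 dA) (hBdiv : IsDGDivisionRing 𝒝 dB)
    (φ : B →ₐ[K] A) (hφ : IsDGHom 𝒝 dB 𝒜 dA φ.toRingHom) :
    ((∀ (i j : ℤ) (x y : A), x ∈ 𝒜 i → y ∈ 𝒜 j → dA x = 0 → dA y = 0 →
        x * y = ((Int.negOnePow (i * j) : ℤ)) • (y * x)) ∧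
      (∀ (i : ℤ) (x : A), x ∈ 𝒜 i → dA x = 0 → x ≠ 0 →
        ∃ y ∈ 𝒜 (-i), dA y = 0 ∧ x * y = 1 ∧ y * x = 1)) ∧
    ((∀ (i j : ℤ) (x y : B), x ∈ 𝒝 i → y ∈ 𝒝 j → dB x = 0 → dB y = 0 →
        x * y = ((Int.negOnePow (i * j) : ℤ)) • (y * x)) ∧
      (∀ (i : ℤ) (x : B), x ∈ 𝒝 i → dB x = 0 → x ≠ 0 →
        ∃ y ∈ 𝒝 (-i), dB y = 0 ∧ x * y = 1 ∧ y * x = 1)) :=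
  cycles_are_graded_division_general 𝒜 𝒝 dA dB hA hB hAcomm hBcomm hAdiv hBdiv
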